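/- Let n ≥ 2 and let i be an odd integer with 1 ≤ i ≤ n. Then, as maps ℝ^n → ℝ^n, (s_0 ∘ [2,n] ∘ [1,n])^{(i−1)/2} ∘ [n−i, n−1] ∘ [n−i−1, n−2] ∘ ⋯ ∘ [1, i] = (s_{n−1} ∘ s_{n−2} ∘ ⋯ ∘ s_1) ∘ t_{e_2+e_3+⋯+e_i}, where the trailing product on the left consists of the blocks [k, k+i−1] for k = n−i, …, 1 (empty when i = n), and for i = 1 the translation on the right is by the zero vector. (Combined with the identity ω_1 = π_1[1,n][n−1,1], this says that ω_i = π_1[1,n](s_0[2,n][1,n])^{(i−1)/2}[n−i,n−1]⋯[1,i] acts on ℝ^n as translation by e_1+⋯+e_i, for odd i, in type B_n^{(1)}.) -/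
import Mathlib


noncomputable section

/-- Value of `x : ℝ^n` at the natural (0-indexed) index `m`, or `0` if out of range. -/
def xval {n : ℕ} (x : Fin n → ℝ) (m : ℕ) : ℝ := if h : m < n then x ⟨m, h⟩ else 0

/-- The simple affine reflections of type `B_n^{(1)}` acting on `ℝ^n`:
for `1 ≤ j ≤ n-1`, `sB n j` swaps the `j`-th and `(j+1)`-th coordinates (1-indexed);
`sB n n` negates the last coordinate; `sB n 0` is `x ↦ (1 - x₂, 1 - x₁, x₃, …, xₙ)`. -/
def sB (n : ℕ) (j : ℕ) (x : Fin n → ℝ) (k : Fin n) : ℝ :=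
  if j = 0 then
    if (k : ℕ) = 0 then 1 - xval x 1
    else if (k : ℕ) = 1 then 1 - xval x 0
    else x k
  else if j = n then
    if (k : ℕ) = n - 1 then -x k else x k
  else
    if (k : ℕ) = j - 1 then xval x j
    else if (k : ℕ) = j then xval x (j - 1)
    else x k

/-- The block `[k,l] = s_k ∘ s_{k+1} ∘ ⋯ ∘ s_l` (rightmost factor applied first). -/
def blkB (n k l : ℕ) : (Fin n → ℝ) → (Fin n → ℝ) :=
  (List.range' k (l + 1 - k)).foldr (fun j f => sB n j ∘ f) id

/-- The trailing product `[n−i,n−1] ∘ [n−i−1,n−2] ∘ ⋯ ∘ [1,i]`,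
consisting of the blocks `[k, k+i−1]` for `k = n−i, n−i−1, …, 1`. -/
def trailB (n i : ℕ) : (Fin n → ℝ) → (Fin n → ℝ) :=
  ((List.range' 1 (n - i)).reverse).foldr (fun m f => blkB n m (m + i - 1) ∘ f) id

/-- The composite `s_{n−1} ∘ s_{n−2} ∘ ⋯ ∘ s_1` (rightmost factor applied first). -/
def revB (n : ℕ) : (Fin n → ℝ) → (Fin n → ℝ) :=
  ((List.range' 1 (n - 1)).reverse).foldr (fun j f => sB n j ∘ f) id

lemma xval_lt {n : ℕ} (x : Fin n → ℝ) (m : ℕ) (hm : m < n) : xval x m = x ⟨m, hm⟩ :=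
  dif_pos hm

lemma sB_mid {n j : ℕ} (hj1 : 1 ≤ j) (hjn : j ≤ n - 1) (x : Fin n → ℝ) (m : ℕ) (hm : m < n) :
    sB n j x ⟨m, hm⟩ =
      if m = j - 1 then xval x j else if m = j then xval x (j - 1) else xval x m := by
  have hj0 : j ≠ 0 := by omega
  have hjn' : j ≠ n := by omega
  simp only [sB, hj0, hjn', if_false]
  rw [xval_lt x m hm]

lemma sB_top {n : ℕ} (hn : 1 ≤ n) (x : Fin n → ℝ) (m : ℕ) (hm : m < n) :
    sB n n x ⟨m, hm⟩ = if m = n - 1 then -(xval x m) else xval x m := by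
  have hn0 : n ≠ 0 := by omega
  simp only [sB, hn0, if_false, if_true, xval_lt x m hm]

lemma sB_zero {n : ℕ} (x : Fin n → ℝ) (m : ℕ) (hm : m < n) :
    sB n 0 x ⟨m, hm⟩ =
      if m = 0 then 1 - xval x 1 else if m = 1 then 1 - xval x 0 else xval x m := by
  simp only [sB, if_true, xval_lt x m hm]

lemma blkB_cons {n k l : ℕ} (h : k ≤ l) : blkB n k l = sB n k ∘ blkB n (k + 1) l := by
  unfold blkB
  rw [show l + 1 - k = (l - k) + 1 by omega, show l + 1 - (k + 1) = l - k by omega,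
    List.range'_succ]
  rfl

lemma blkB_nil {n k l : ℕ} (h : l < k) : blkB n k l = id := by
  unfold blkB
  rw [show l + 1 - k = 0 by omega]
  rfl

lemma foldr_comp {n : ℕ} (L : List ℕ) (g : (Fin n → ℝ) → (Fin n → ℝ)) :
    L.foldr (fun j f => sB n j ∘ f) g = (L.foldr (fun j f => sB n j ∘ f) id) ∘ g := by
  induction L with
  | nil => rfl
  | cons a t ih => simp only [List.foldr_cons, ih]; rfl

lemma blkB_top_split {n k : ℕ} (hk : 1 ≤ k) (hkn : k ≤ n - 1) (hn : 1 ≤ n) :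
    blkB n k n = blkB n k (n - 1) ∘ sB n n := by
  unfold blkB
  rw [show n + 1 - k = (n - k) + 1 by omega, List.range'_1_concat,
    show k + (n - k) = n by omega, List.foldr_append,
    show (n - 1) + 1 - k = n - k by omega]
  simp only [List.foldr_cons, List.foldr_nil]
  exact foldr_comp _ _

lemma blk_apply {n : ℕ} : ∀ (d k : ℕ), 1 ≤ k → k + d ≤ n - 1 → ∀ (x : Fin n → ℝ)
    (m : ℕ) (hm : m < n),
    blkB n k (k + d) x ⟨m, hm⟩ =
      if m = k - 1 then xval x (k + d)
      else if k ≤ m ∧ m ≤ k + d then xval x (m - 1)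
      else xval x m := by
  intro d
  induction d with
  | zero =>
    intro k hk hkn x m hm
    have h1 : blkB n k (k + 0) = sB n k ∘ blkB n (k + 1) (k + 0) := blkB_cons (by omega)
    have h2 : blkB n (k + 1) (k + 0) = id := blkB_nil (by omega)
    rw [h1, h2]
    simp only [Function.comp_apply, id_eq]
    rw [sB_mid hk (by omega) x m hm]
    split_ifs <;> first | rfl | omega | (congr 1 <;> omega)
  | succ d ih =>
    intro k hk hkn x m hm
    rw [blkB_cons (by omega : k ≤ k + (d + 1))]
    simp only [Function.comp_apply]
    rw [sB_mid hk (by omega) _ m hm]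
    have key : ∀ t, (ht : t < n) → xval (blkB n (k + 1) (k + (d + 1)) x) t =
        if t = k then xval x (k + (d + 1))
        else if k + 1 ≤ t ∧ t ≤ k + (d + 1) then xval x (t - 1)
        else xval x t := by
      intro t ht
      rw [xval_lt _ t ht]
      have := ih (k + 1) (by omega) (by omega) x t ht
      rw [show (k + 1) + d = k + (d + 1) by omega] at this
      rw [this]
      congr 1 <;> omega
    rw [key k (by omega), key (k - 1) (by omega), key m hm]
    split_ifs <;> first | rfl | omega | (congr 1 <;> omega)

lemma blk1n_apply {n : ℕ} (hn : 2 ≤ n) (x : Fin n → ℝ) (m : ℕ) (hm : m < n) :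
    blkB n 1 n x ⟨m, hm⟩ = if m = 0 then -(xval x (n - 1)) else xval x (m - 1) := by
  rw [blkB_top_split (by omega) (by omega) (by omega)]
  simp only [Function.comp_apply]
  rw [show n - 1 = 1 + (n - 2) by omega, blk_apply (n - 2) 1 (by omega) (by omega)]
  have hy : ∀ t, (ht : t < n) → xval (sB n n x) t =
      if t = n - 1 then -(xval x t) else xval x t := by
    intro t ht
    rw [xval_lt _ t ht, sB_top (by omega) x t ht]
  rw [hy (1 + (n - 2)) (by omega), hy (m - 1) (by omega), hy m hm]
  split_ifs <;> first | rfl | omega | (congr 1 <;> omega) | (congr 2 <;> omega)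

lemma blk2n_apply {n : ℕ} (hn : 2 ≤ n) (x : Fin n → ℝ) (m : ℕ) (hm : m < n) :
    blkB n 2 n x ⟨m, hm⟩ =
      if m = 1 then -(xval x (n - 1)) else if 2 ≤ m then xval x (m - 1) else xval x m := by
  rcases eq_or_lt_of_le hn with h2 | h3
  · -- n = 2
    subst h2
    have h1 : blkB 2 2 2 = sB 2 2 ∘ blkB 2 3 2 := blkB_cons (by omega)
    have h2 : blkB 2 3 2 = id := blkB_nil (by omega)
    rw [h1, h2]
    simp only [Function.comp_apply, id_eq]
    rw [sB_top (by omega) x m hm]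
    split_ifs <;> first | rfl | omega | (congr 1 <;> omega) | (congr 2 <;> omega)
  · have h3' : 3 ≤ n := h3
    rw [blkB_top_split (by omega) (by omega) (by omega)]
    simp only [Function.comp_apply]
    rw [show n - 1 = 2 + (n - 3) by omega, blk_apply (n - 3) 2 (by omega) (by omega)]
    have hy : ∀ t, (ht : t < n) → xval (sB n n x) t =
        if t = n - 1 then -(xval x t) else xval x t := by
      intro t ht
      rw [xval_lt _ t ht, sB_top (by omega) x t ht]
    rw [hy (2 + (n - 3)) (by omega), hy (m - 1) (by omega), hy m hm]
    split_ifs <;> first | rfl | omega | (congr 1 <;> omega) | (congr 2 <;> omega)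

lemma A_apply {n : ℕ} (hn : 2 ≤ n) (x : Fin n → ℝ) (m : ℕ) (hm : m < n) :
    (sB n 0 ∘ blkB n 2 n ∘ blkB n 1 n) x ⟨m, hm⟩ =
      if m = 0 then xval x (n - 2) + 1
      else if m = 1 then xval x (n - 1) + 1
      else xval x (m - 2) := by
  simp only [Function.comp_apply]
  rw [sB_zero _ m hm]
  have hy : ∀ t, (ht : t < n) → xval (blkB n 1 n x) t =
      if t = 0 then -(xval x (n - 1)) else xval x (t - 1) := by
    intro t ht
    rw [xval_lt _ t ht, blk1n_apply hn x t ht]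
  have hz : ∀ t, (ht : t < n) → xval (blkB n 2 n (blkB n 1 n x)) t =
      if t = 1 then -(xval (blkB n 1 n x) (n - 1))
      else if 2 ≤ t then xval (blkB n 1 n x) (t - 1)
      else xval (blkB n 1 n x) t := by
    intro t ht
    rw [xval_lt _ t ht, blk2n_apply hn _ t ht]
  rw [hz 1 (by omega), hz 0 (by omega), hz m hm,
    hy (n - 1) (by omega), hy 0 (by omega), hy (m - 1) (by omega), hy m hm]
  split_ifs
  all_goals first
    | rfl
    | omega
    | contradiction
    | (congr 1 <;> omega)
    | (congr 2 <;> omega)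
    | (congr 1 <;> congr 1 <;> omega)
    | ring1
    | (rw [show (n : ℕ) - 1 - 1 = n - 2 by omega]; ring1)

lemma A_iter {n : ℕ} (hn : 2 ≤ n) : ∀ (j : ℕ), 2 * j ≤ n → ∀ (x : Fin n → ℝ)
    (m : ℕ) (hm : m < n),
    ((sB n 0 ∘ blkB n 2 n ∘ blkB n 1 n)^[j]) x ⟨m, hm⟩ =
      if m < 2 * j then xval x (m + n - 2 * j) + 1 else xval x (m - 2 * j) := by
  intro j
  induction j with
  | zero =>
    intro hj x m hm
    simp only [Function.iterate_zero, id_eq, Nat.mul_zero, Nat.not_lt_zero, if_false]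
    rw [show m - 2 * 0 = m by omega, xval_lt x m hm]
  | succ j ih =>
    intro hj x m hm
    rw [Function.iterate_succ_apply']
    rw [A_apply hn _ m hm]
    have hy : ∀ t, (ht : t < n) →
        xval ((sB n 0 ∘ blkB n 2 n ∘ blkB n 1 n)^[j] x) t =
        if t < 2 * j then xval x (t + n - 2 * j) + 1 else xval x (t - 2 * j) := by
      intro t ht
      rw [xval_lt _ t ht, ih (by omega) x t ht]
    rw [hy (n - 2) (by omega), hy (n - 1) (by omega), hy (m - 2) (by omega)]
    split_ifs <;> first | rfl | omega | (congr 2 <;> omega) | (congr 1 <;> omega) |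
      (congr 1 <;> congr 1 <;> omega)

/-- Auxiliary: the partial trailing product with `c` blocks. -/
def tAux (n i c : ℕ) : (Fin n → ℝ) → (Fin n → ℝ) :=
  ((List.range' 1 c).reverse).foldr (fun m f => blkB n m (m + i - 1) ∘ f) id

lemma trailB_eq_tAux (n i : ℕ) : trailB n i = tAux n i (n - i) := rfl

lemma tAux_succ (n i c : ℕ) :
    tAux n i (c + 1) = blkB n (c + 1) (c + 1 + i - 1) ∘ tAux n i c := by
  unfold tAux
  rw [List.range'_1_concat, List.reverse_append]
  simp only [List.reverse_cons, List.reverse_nil, List.nil_append, List.cons_append,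
    List.foldr_cons]
  rw [show 1 + c = c + 1 by omega]

lemma tAux_apply {n i : ℕ} (hi1 : 1 ≤ i) : ∀ (c : ℕ), c + i ≤ n → ∀ (x : Fin n → ℝ)
    (m : ℕ) (hm : m < n),
    tAux n i c x ⟨m, hm⟩ =
      if m < c then xval x (m + i) else if m < c + i then xval x (m - c) else xval x m := by
  intro c
  induction c with
  | zero =>
    intro hc x m hm
    simp only [Nat.not_lt_zero, if_false, Nat.zero_add]
    show x ⟨m, hm⟩ = _
    rw [show m - 0 = m by omega, xval_lt x m hm]
    split_ifs <;> rfl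
  | succ c ih =>
    intro hc x m hm
    rw [tAux_succ]
    simp only [Function.comp_apply]
    rw [show c + 1 + i - 1 = (c + 1) + (i - 1) by omega,
      blk_apply (i - 1) (c + 1) (by omega) (by omega)]
    have hy : ∀ t, (ht : t < n) → xval (tAux n i c x) t =
        if t < c then xval x (t + i) else if t < c + i then xval x (t - c) else xval x t := by
      intro t ht
      rw [xval_lt _ t ht, ih (by omega) x t ht]
    rw [hy ((c + 1) + (i - 1)) (by omega), hy (m - 1) (by omega), hy m hm]
    split_ifs <;> first | rfl | omega | (congr 1 <;> omega)

/-- Auxiliary: the partial reverse product `s_c ∘ ⋯ ∘ s_1`. -/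
def rAux (n c : ℕ) : (Fin n → ℝ) → (Fin n → ℝ) :=
  ((List.range' 1 c).reverse).foldr (fun j f => sB n j ∘ f) id

lemma revB_eq_rAux (n : ℕ) : revB n = rAux n (n - 1) := rfl

lemma rAux_succ (n c : ℕ) : rAux n (c + 1) = sB n (c + 1) ∘ rAux n c := by
  unfold rAux
  rw [List.range'_1_concat, List.reverse_append]
  simp only [List.reverse_cons, List.reverse_nil, List.nil_append, List.cons_append,
    List.foldr_cons]
  rw [show 1 + c = c + 1 by omega]

lemma rAux_apply {n : ℕ} : ∀ (c : ℕ), c ≤ n - 1 → ∀ (x : Fin n → ℝ) (m : ℕ) (hm : m < n),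
    rAux n c x ⟨m, hm⟩ =
      if m < c then xval x (m + 1) else if m = c then xval x 0 else xval x m := by
  intro c
  induction c with
  | zero =>
    intro hc x m hm
    simp only [Nat.not_lt_zero, if_false]
    show x ⟨m, hm⟩ = _
    rw [xval_lt x m hm]
    split_ifs with h
    · subst h; exact (xval_lt x 0 hm).symm
    · rfl
  | succ c ih =>
    intro hc x m hm
    rw [rAux_succ]
    simp only [Function.comp_apply]
    rw [sB_mid (n := n) (j := c + 1) (by omega) (by omega) _ m hm]
    have hy : ∀ t, (ht : t < n) → xval (rAux n c x) t =
        if t < c then xval x (t + 1) else if t = c then xval x 0 else xval x t := by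
      intro t ht
      rw [xval_lt _ t ht, ih (by omega) x t ht]
    rw [hy (c + 1) (by omega), hy (c + 1 - 1) (by omega), hy m hm]
    split_ifs <;> first | rfl | omega | (congr 1 <;> omega)

/-- In type `B_n^{(1)}`, for odd `i` with `1 ≤ i ≤ n`,
`(s₀ ∘ [2,n] ∘ [1,n])^{(i−1)/2} ∘ [n−i,n−1] ∘ ⋯ ∘ [1,i]
  = (s_{n−1} ∘ ⋯ ∘ s_1) ∘ t_{e₂ + ⋯ + e_i}`. -/
theorem statement1 (n i : ℕ) (hn : 2 ≤ n) (hi1 : 1 ≤ i) (hin : i ≤ n) (hi : Odd i) :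
    (sB n 0 ∘ blkB n 2 n ∘ blkB n 1 n)^[(i - 1) / 2] ∘ trailB n i
      = revB n ∘
        fun x => x + (fun (k : Fin n) => if 1 ≤ (k : ℕ) ∧ (k : ℕ) < i then (1 : ℝ) else 0) := by
  funext x k
  obtain ⟨m, hm⟩ := k
  have h2j : 2 * ((i - 1) / 2) = i - 1 := by
    obtain ⟨t, ht⟩ := hi; omega
  simp only [Function.comp_apply]
  rw [A_iter hn ((i - 1) / 2) (by omega) _ m hm, h2j]
  rw [revB_eq_rAux, rAux_apply (n - 1) (le_refl _) _ m hm]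
  have htr : ∀ t, (ht : t < n) → xval (trailB n i x) t =
      if t < n - i then xval x (t + i) else xval x (t - (n - i)) := by
    intro t ht
    rw [xval_lt _ t ht, trailB_eq_tAux, tAux_apply hi1 (n - i) (by omega) x t ht]
    split_ifs <;> first | rfl | omega
  have hv : ∀ t, (ht : t < n) →
      xval (x + fun (k : Fin n) => if 1 ≤ (k : ℕ) ∧ (k : ℕ) < i then (1 : ℝ) else 0) t
        = xval x t + (if 1 ≤ t ∧ t < i then 1 else 0) := by
    intro t ht
    rw [xval_lt _ t ht, xval_lt x t ht]
    rfl
  by_cases hm1 : m < n - 1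
  · rw [if_pos hm1, hv (m + 1) (by omega)]
    by_cases hc : m < i - 1
    · rw [if_pos hc, htr (m + n - (i - 1)) (by omega), if_neg (by omega : ¬ m + n - (i - 1) < n - i),
        if_pos (by omega : 1 ≤ m + 1 ∧ m + 1 < i),
        show m + n - (i - 1) - (n - i) = m + 1 by omega]
    · rw [if_neg hc, htr (m - (i - 1)) (by omega), if_pos (by omega : m - (i - 1) < n - i),
        if_neg (by omega : ¬(1 ≤ m + 1 ∧ m + 1 < i)),
        show m - (i - 1) + i = m + 1 by omega]
      ring
  · rw [if_neg hm1, if_pos (by omega : m = n - 1), hv 0 (by omega),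
      if_neg (by omega : ¬(1 ≤ 0 ∧ 0 < i)), if_neg (by omega : ¬ m < i - 1),
      htr (m - (i - 1)) (by omega), if_neg (by omega : ¬ m - (i - 1) < n - i),
      show m - (i - 1) - (n - i) = 0 by omega]
    ring

end
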